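/- arXiv:2603.02689 — 2 statements merged into one kernel-verified Lean document; each statement's English description precedes it below -/
import Mathlib

section
/- Let X be a real random variable with E[X] ≤ x and a ≤ X ≤ b almost surely, where b − a ≤ S. Then for the potential φ(X, t, λ, S, N) = exp((4λ/(S²N))·(X − (λ/2)·(1 + t/N))) with λ, S, N > 0, it holds that E[φ(X, t+1, λ, S, N)] ≤ φ(x, t, λ, S, N). -/
open MeasureTheory

section Aux
open Real


lemma key_aux (p : ℝ) (hp0 : 0 ≤ p) (hp1 : p ≤ 1) (h : ℝ) (hh : 0 ≤ h) :
    (1 - p) * Real.exp (-(p * h)) + p * Real.exp ((1 - p) * h) ≤ Real.exp (h ^ 2 / 8) := by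
  set g : ℝ → ℝ := fun x => (1 - p) * Real.exp (-(p * x)) + p * Real.exp ((1 - p) * x) with hgdef
  have gpos : ∀ x, 0 < g x := by
    intro x
    rcases eq_or_lt_of_le hp0 with h0 | h0
    · simp [hgdef, ← h0]
    · exact add_pos_of_nonneg_of_pos (mul_nonneg (by linarith) (Real.exp_pos _).le)
        (mul_pos h0 (Real.exp_pos _))
  set g1 : ℝ → ℝ := fun x => p * (1 - p) * (Real.exp ((1 - p) * x) - Real.exp (-(p * x))) with hg1def
  set g2 : ℝ → ℝ := fun x => p * (1 - p) * ((1 - p) * Real.exp ((1 - p) * x) + p * Real.exp (-(p * x))) with hg2def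
  have e1 : ∀ x : ℝ, HasDerivAt (fun x : ℝ => Real.exp (-(p * x))) (Real.exp (-(p * x)) * (-p)) x := by
    intro x
    have hlin : HasDerivAt (fun x : ℝ => -(p * x)) (-p) x := by
      exact ((hasDerivAt_id x).const_mul p).neg.congr_deriv (by simp)
    exact hlin.exp
  have e2 : ∀ x : ℝ, HasDerivAt (fun x : ℝ => Real.exp ((1 - p) * x)) (Real.exp ((1 - p) * x) * (1 - p)) x := by
    intro x
    have hlin : HasDerivAt (fun x : ℝ => (1 - p) * x) (1 - p) x := by
      simpa using (hasDerivAt_id x).const_mul (1 - p)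
    exact hlin.exp
  have hgd : ∀ x, HasDerivAt g (g1 x) x := by
    intro x
    have := ((e1 x).const_mul (1 - p)).add ((e2 x).const_mul p)
    refine this.congr_deriv ?_
    simp only [hg1def]; ring
  have hg1d : ∀ x, HasDerivAt g1 (g2 x) x := by
    intro x
    have := ((e2 x).sub (e1 x)).const_mul (p * (1 - p))
    refine this.congr_deriv ?_
    simp only [hg2def]; ring
  set F1 : ℝ → ℝ := fun x => x / 4 - g1 x / g x with hF1def
  have hF1d : ∀ x, HasDerivAt F1 (1 / 4 - (g2 x * g x - g1 x * g1 x) / (g x) ^ 2) x := by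
    intro x
    exact ((hasDerivAt_id x).div_const 4).sub ((hg1d x).div (hgd x) (gpos x).ne')
  have hderiv_nonneg : ∀ x, 0 ≤ 1 / 4 - (g2 x * g x - g1 x * g1 x) / (g x) ^ 2 := by
    intro x
    have hnum : g2 x * g x - g1 x * g1 x
        = ((1 - p) * Real.exp (-(p * x))) * (p * Real.exp ((1 - p) * x)) := by
      simp only [hg1def, hg2def, hgdef]; ring
    rw [hnum, sub_nonneg, div_le_iff₀ (pow_pos (gpos x) 2)]
    have : (g x) ^ 2 = ((1 - p) * Real.exp (-(p * x)) + p * Real.exp ((1 - p) * x)) ^ 2 := by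
      simp [hgdef]
    nlinarith [sq_nonneg ((1 - p) * Real.exp (-(p * x)) - p * Real.exp ((1 - p) * x))]
  have hF1mono : Monotone F1 :=
    monotone_of_deriv_nonneg (fun x => (hF1d x).differentiableAt)
      (fun x => by rw [(hF1d x).deriv]; exact hderiv_nonneg x)
  have hF10 : F1 0 = 0 := by simp [hF1def, hg1def]
  set F : ℝ → ℝ := fun x => x ^ 2 / 8 - Real.log (g x) with hFdef
  have hFd : ∀ x, HasDerivAt F (F1 x) x := by
    intro x
    have hlog : HasDerivAt (fun x => Real.log (g x)) (g1 x / g x) x := (hgd x).log (gpos x).ne'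
    have hsq : HasDerivAt (fun x : ℝ => x ^ 2 / 8) (x / 4) x := by
      have := (hasDerivAt_pow 2 x).div_const 8
      refine this.congr_deriv ?_; norm_num; ring
    exact hsq.sub hlog
  have hFmono : MonotoneOn F (Set.Ici 0) := by
    apply monotoneOn_of_deriv_nonneg (convex_Ici 0)
      (fun x _ => (hFd x).differentiableAt.continuousAt.continuousWithinAt)
      (fun x hx => (hFd x).differentiableAt.differentiableWithinAt)
    intro x hx
    rw [(hFd x).deriv]
    rw [interior_Ici] at hx
    have := hF1mono (le_of_lt hx)
    rw [hF10] at this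
    exact this
  have hF0 : F 0 = 0 := by simp [hFdef, hgdef]
  have hFh : 0 ≤ F h := by
    have := hFmono (Set.self_mem_Ici) (Set.mem_Ici.mpr hh) hh
    rwa [hF0] at this
  have : Real.log (g h) ≤ h ^ 2 / 8 := by simp only [hFdef] at hFh; linarith
  calc g h = Real.exp (Real.log (g h)) := (Real.exp_log (gpos h)).symm
    _ ≤ Real.exp (h ^ 2 / 8) := Real.exp_le_exp.mpr this


lemma hoeff_aux {Ω : Type*} [MeasurableSpace Ω] (μ : Measure Ω) [IsProbabilityMeasure μ]
    (X : Ω → ℝ) (a b c : ℝ) (hmeas : Measurable X)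
    (hab : ∀ᵐ ω ∂μ, X ω ∈ Set.Icc a b) (hc : 0 ≤ c) :
    (∫ ω, Real.exp (c * X ω) ∂μ)
      ≤ Real.exp (c * (∫ ω, X ω ∂μ) + c ^ 2 * (b - a) ^ 2 / 8) := by
  have hXint : Integrable X μ := by
    refine Integrable.mono' (integrable_const (max |a| |b|)) hmeas.aestronglyMeasurable ?_
    filter_upwards [hab] with ω hω
    rw [Real.norm_eq_abs]
    exact abs_le_max_abs_abs hω.1 hω.2
  have hEint : Integrable (fun ω => Real.exp (c * X ω)) μ := by
    refine Integrable.mono' (integrable_const (Real.exp (|c| * max |a| |b|)))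
      (hmeas.const_mul c).exp.aestronglyMeasurable ?_
    filter_upwards [hab] with ω hω
    rw [Real.norm_eq_abs, abs_of_pos (Real.exp_pos _), Real.exp_le_exp]
    calc c * X ω ≤ |c * X ω| := le_abs_self _
      _ = |c| * |X ω| := abs_mul _ _
      _ ≤ |c| * max |a| |b| := by
          exact mul_le_mul_of_nonneg_left (abs_le_max_abs_abs hω.1 hω.2) (abs_nonneg c)
  have hab' : a ≤ b := by
    obtain ⟨ω, hω⟩ := hab.exists
    exact le_trans hω.1 hω.2
  set m := ∫ ω, X ω ∂μ with hm
  have hma : a ≤ m := by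
    have := integral_mono_ae (integrable_const a) hXint (hab.mono fun ω h => h.1)
    simpa using this
  have hmb : m ≤ b := by
    have := integral_mono_ae hXint (integrable_const b) (hab.mono fun ω h => h.2)
    simpa using this
  rcases eq_or_lt_of_le hab' with hEq | hlt
  · -- degenerate case a = b
    have hX : ∀ᵐ ω ∂μ, X ω = a := by
      filter_upwards [hab] with ω hω
      exact le_antisymm (hEq ▸ hω.2) hω.1
    have h1 : (∫ ω, Real.exp (c * X ω) ∂μ) = Real.exp (c * a) := by
      rw [integral_congr_ae (hX.mono fun ω h => by rw [h]), integral_const]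
      simp
    have h2 : m = a := by
      rw [hm, integral_congr_ae hX, integral_const]; simp
    rw [h1, h2, Real.exp_le_exp]
    nlinarith [sq_nonneg (c * (b - a))]
  · have hba : (0:ℝ) < b - a := by linarith
    set p := (m - a) / (b - a) with hp
    set h := c * (b - a) with hhdef
    have hp0 : 0 ≤ p := div_nonneg (by linarith) hba.le
    have hp1 : p ≤ 1 := (div_le_one hba).mpr (by linarith)
    have hh : 0 ≤ h := mul_nonneg hc hba.le
    set α := (Real.exp (c * b) - Real.exp (c * a)) / (b - a) with hα
    set β := (b * Real.exp (c * a) - a * Real.exp (c * b)) / (b - a) with hβ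
    -- pointwise convexity bound
    have hpt : ∀ᵐ ω ∂μ, Real.exp (c * X ω) ≤ α * X ω + β := by
      filter_upwards [hab] with ω hω
      set t1 := (b - X ω) / (b - a) with ht1
      set t2 := (X ω - a) / (b - a) with ht2
      have ht1n : 0 ≤ t1 := div_nonneg (by linarith [hω.2]) hba.le
      have ht2n : 0 ≤ t2 := div_nonneg (by linarith [hω.1]) hba.le
      have hsum : t1 + t2 = 1 := by rw [ht1, ht2]; field_simp; ring
      have hconv := convexOn_exp.2 (Set.mem_univ (c * a)) (Set.mem_univ (c * b)) ht1n ht2n hsum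
      have harg : t1 • (c * a) + t2 • (c * b) = c * X ω := by
        rw [smul_eq_mul, smul_eq_mul, ht1, ht2]
        field_simp
        ring
      rw [harg] at hconv
      calc Real.exp (c * X ω) ≤ t1 * Real.exp (c * a) + t2 * Real.exp (c * b) := hconv
        _ = α * X ω + β := by
            simp only [ht1, ht2, hα, hβ]
            field_simp
            ring
    have hint : (∫ ω, Real.exp (c * X ω) ∂μ) ≤ α * m + β := by
      have := integral_mono_ae hEint ((hXint.const_mul α).add (integrable_const β)) hpt
      calc (∫ ω, Real.exp (c * X ω) ∂μ) ≤ ∫ ω, α * X ω + β ∂μ := this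
        _ = α * m + β := by
            rw [integral_add (hXint.const_mul α) (integrable_const β),
              integral_const_mul, integral_const]
            simp [hm]
    refine hint.trans ?_
    have hkey := key_aux p hp0 hp1 h hh
    have hph1 : -(p * h) = c * a - c * m := by
      simp only [hp, hhdef]; field_simp; ring
    have hph2 : (1 - p) * h = c * b - c * m := by
      simp only [hp, hhdef]; field_simp; ring
    have h1p : 1 - p = (b - m) / (b - a) := by
      simp only [hp]; field_simp; ring
    calc α * m + β
        = Real.exp (c * m) * ((1 - p) * Real.exp (-(p * h)) + p * Real.exp ((1 - p) * h)) := by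
          rw [hph1, hph2, Real.exp_sub, Real.exp_sub, h1p]
          simp only [hα, hβ, hp]
          field_simp
          ring
      _ ≤ Real.exp (c * m) * Real.exp (h ^ 2 / 8) :=
          mul_le_mul_of_nonneg_left hkey (Real.exp_pos _).le
      _ = Real.exp (c * m + c ^ 2 * (b - a) ^ 2 / 8) := by
          rw [← Real.exp_add]
          congr 1
          simp only [hhdef]; ring

end Aux

/-- The potential function φ from the derandomization of Azuma's inequality. -/
noncomputable def phi (X t lam S N : ℝ) : ℝ :=
  Real.exp ((4 * lam / (S ^ 2 * N)) * (X - (lam / 2) * (1 + t / N)))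

/-- If X is a random variable with E[X] ≤ x and a ≤ X ≤ b a.s. with b − a ≤ S,
then E[φ(X, t+1, λ, S, N)] ≤ φ(x, t, λ, S, N). -/
theorem stmt_1 {Ω : Type*} [MeasurableSpace Ω] (μ : Measure Ω)
    [IsProbabilityMeasure μ] (X : Ω → ℝ) (a b S lam N t x : ℝ)
    (hmeas : Measurable X)
    (hab : ∀ᵐ ω ∂μ, X ω ∈ Set.Icc a b)
    (hba : b - a ≤ S)
    (hlam : 0 < lam) (hS : 0 < S) (hN : 0 < N) (ht : 0 ≤ t)
    (hx : (∫ ω, X ω ∂μ) ≤ x) :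
    (∫ ω, phi (X ω) (t + 1) lam S N ∂μ) ≤ phi x t lam S N := by
  have hab' : a ≤ b := by
    obtain ⟨ω, hω⟩ := hab.exists
    exact le_trans hω.1 hω.2
  set c := 4 * lam / (S ^ 2 * N) with hc
  have hcpos : 0 < c := by positivity
  set m := ∫ ω, X ω ∂μ with hm
  have hhoeff := hoeff_aux μ X a b c hmeas hab hcpos.le
  set K' := (lam / 2) * (1 + (t + 1) / N) with hK'
  set K := (lam / 2) * (1 + t / N) with hK
  have step1 : (∫ ω, phi (X ω) (t + 1) lam S N ∂μ)
      = (∫ ω, Real.exp (c * X ω) ∂μ) * Real.exp (-(c * K')) := by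
    rw [← integral_mul_const]
    refine integral_congr_ae (Filter.Eventually.of_forall fun ω => ?_)
    simp only [phi, ← Real.exp_add, ← hc, ← hK']
    ring_nf
  rw [step1]
  have step2 : (∫ ω, Real.exp (c * X ω) ∂μ) * Real.exp (-(c * K'))
      ≤ Real.exp (c * m + c ^ 2 * (b - a) ^ 2 / 8) * Real.exp (-(c * K')) :=
    mul_le_mul_of_nonneg_right hhoeff (Real.exp_pos _).le
  refine step2.trans ?_
  rw [← Real.exp_add]
  have hphix : phi x t lam S N = Real.exp (c * x - c * K) := by
    simp only [phi, ← hc, ← hK]; ring_nf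
  rw [hphix, Real.exp_le_exp]
  have h1 : c * m ≤ c * x := mul_le_mul_of_nonneg_left hx hcpos.le
  have h2 : (b - a) ^ 2 ≤ S ^ 2 := by nlinarith
  have h3 : c ^ 2 * (b - a) ^ 2 / 8 ≤ c ^ 2 * S ^ 2 / 8 := by nlinarith [sq_nonneg c]
  have hid : c ^ 2 * S ^ 2 / 8 = c * (lam / (2 * N)) := by
    rw [hc]; field_simp; ring
  have hKsplit : K' = K + lam / (2 * N) := by
    rw [hK', hK]; field_simp; ring
  have h4 : c * K' = c * K + c * (lam / (2 * N)) := by rw [hKsplit]; ring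
  linarith
end

section
/- Every graph G with maximum degree Δ admits a partition of its edge set into at most Δ + 1 matchings. -/
open Finset

set_option linter.unusedSectionVars false
namespace VizingAux

variable {V : Type*} [Fintype V] [DecidableEq V] (G : SimpleGraph V) [DecidableRel G.Adj]

variable {n : ℕ}

def Proper (s : Finset (Sym2 V)) (f : Sym2 V → Fin n) : Prop :=
  ∀ e₁ ∈ s, ∀ e₂ ∈ s, e₁ ≠ e₂ → (∃ v, v ∈ e₁ ∧ v ∈ e₂) → f e₁ ≠ f e₂

def Free (s : Finset (Sym2 V)) (f : Sym2 V → Fin n) (v : V) (c : Fin n) : Prop :=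
  ∀ e ∈ s, v ∈ e → f e ≠ c

def IsFan (s : Finset (Sym2 V)) (f : Sym2 V → Fin n) (x : V) (L : List V) : Prop :=
  (∀ z ∈ L, G.Adj x z) ∧ L.Nodup ∧
  (∀ i, (h : i + 1 < L.length) → s(x, L[i+1]) ∈ s) ∧
  (∀ i, (h : i + 1 < L.length) → Free s f L[i] (f s(x, L[i+1])))

lemma exists_free {Δ : ℕ} (hΔ : ∀ v, G.degree v ≤ Δ) (s : Finset (Sym2 V))
    (hs : ↑s ⊆ G.edgeSet) (f : Sym2 V → Fin (Δ + 1)) (v : V) :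
    ∃ c, Free s f v c := by
  classical
  set t : Finset (Fin (Δ + 1)) := (s.filter (fun e => v ∈ e)).image f with ht
  have hsub : s.filter (fun e => v ∈ e) ⊆ G.incidenceFinset v := by
    intro e he
    simp only [mem_filter] at he
    rw [SimpleGraph.mem_incidenceFinset]
    exact ⟨hs he.1, he.2⟩
  have hcard : t.card < Fintype.card (Fin (Δ + 1)) := by
    have h1 : t.card ≤ (s.filter (fun e => v ∈ e)).card := Finset.card_image_le
    have h2 := Finset.card_le_card hsub
    rw [SimpleGraph.card_incidenceFinset_eq_degree] at h2
    have := hΔ v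
    simp only [Fintype.card_fin]
    omega
  obtain ⟨c, hc⟩ : ∃ c, c ∉ t := by
    by_contra h
    push_neg at h
    have : (Finset.univ : Finset (Fin (Δ + 1))) ⊆ t := fun c _ => h c
    have := Finset.card_le_card this
    simp only [Finset.card_univ] at this
    omega
  refine ⟨c, fun e he hv hfe => hc ?_⟩
  rw [ht]
  exact Finset.mem_image.mpr ⟨e, Finset.mem_filter.mpr ⟨he, hv⟩, hfe⟩

lemma sym2_inj {x a b : V} (ha : a ≠ x) (h : s(x, a) = s(x, b)) : a = b := by
  rw [Sym2.eq_iff] at h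
  tauto

/-- Rotating a fan: if a color `c` is free at `x` and at the last vertex of the fan,
we can extend the proper coloring to the uncolored edge at the head of the fan. -/
lemma rot (x : V) (c : Fin n) :
    ∀ (L' : List V) (y₀ : V) (s : Finset (Sym2 V)) (f : Sym2 V → Fin n),
      ↑s ⊆ G.edgeSet → Proper s f → IsFan G s f x (y₀ :: L') → s(x, y₀) ∉ s →
      Free s f x c → Free s f ((y₀ :: L').getLast (List.cons_ne_nil _ _)) c →
      ∃ f' : Sym2 V → Fin n, Proper (insert s(x, y₀) s) f' := by
  intro L'
  induction L' with
  | nil =>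
    intro y₀ s f hs hf hfan hns hfx hfy
    refine ⟨Function.update f s(x, y₀) c, ?_⟩
    have hupd : ∀ e ∈ s, Function.update f s(x, y₀) c e = f e := by
      intro e he
      apply Function.update_of_ne
      rintro rfl; exact hns he
    intro e₁ he₁ e₂ he₂ hne ⟨v, hv₁, hv₂⟩
    simp only [Finset.mem_insert] at he₁ he₂
    simp only [List.getLast] at hfy
    rcases he₁ with rfl | he₁ <;> rcases he₂ with rfl | he₂
    · exact absurd rfl hne
    · rw [hupd e₂ he₂, Function.update_self]
      have hv : v = x ∨ v = y₀ := Sym2.mem_iff.mp hv₁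
      rcases hv with rfl | rfl
      · exact fun h => hfx e₂ he₂ hv₂ h.symm
      · exact fun h => hfy e₂ he₂ hv₂ h.symm
    · rw [hupd e₁ he₁, Function.update_self]
      have hv : v = x ∨ v = y₀ := Sym2.mem_iff.mp hv₂
      rcases hv with rfl | rfl
      · exact hfx e₁ he₁ hv₁
      · exact hfy e₁ he₁ hv₁
    · rw [hupd e₁ he₁, hupd e₂ he₂]
      exact hf e₁ he₁ e₂ he₂ hne ⟨v, hv₁, hv₂⟩
  | cons y₁ L'' IH =>
    intro y₀ s f hs hf hfan hns hfx hfy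
    obtain ⟨hadj, hnd, hes, hfree⟩ := hfan
    have hxy₀ : G.Adj x y₀ := hadj y₀ (by simp)
    have hxy₁ : G.Adj x y₁ := hadj y₁ (by simp)
    have hy₀y₁ : y₀ ≠ y₁ := by
      intro h; rw [List.nodup_cons] at hnd; exact hnd.1 (h ▸ by simp)
    have he₁s : s(x, y₁) ∈ s := by
      have := hes 0 (by simp)
      simpa using this
    have hediff : s(x, y₀) ≠ s(x, y₁) := fun h => hy₀y₁ (sym2_inj hxy₀.ne' h)
    set c₁ := f s(x, y₁) with hc₁
    have hfree₀ : Free s f y₀ c₁ := by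
      have := hfree 0 (by simp)
      simpa using this
    set f₁ := Function.update f s(x, y₀) c₁ with hf₁
    set s₂ := insert s(x, y₀) (s.erase s(x, y₁)) with hs₂
    have hmem_s₂ : ∀ e, e ∈ s₂ ↔ e = s(x, y₀) ∨ (e ∈ s ∧ e ≠ s(x, y₁)) := by
      intro e
      simp only [hs₂, Finset.mem_insert, Finset.mem_erase]
      tauto
    have hupd : ∀ e, e ≠ s(x, y₀) → f₁ e = f e := fun e he => Function.update_of_ne he _ _
    have hne_s : ∀ e ∈ s, e ≠ s(x, y₀) := fun e he h => hns (h ▸ he)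
    -- properness of f₁ on s₂
    have hf₂ : Proper s₂ f₁ := by
      intro e₁ he₁ e₂ he₂ hne ⟨v, hv₁, hv₂⟩
      rw [hmem_s₂] at he₁ he₂
      rcases he₁ with rfl | ⟨he₁, he₁'⟩ <;> rcases he₂ with rfl | ⟨he₂, he₂'⟩
      · exact absurd rfl hne
      · rw [hupd e₂ (hne_s e₂ he₂), hf₁, Function.update_self]
        have hv : v = x ∨ v = y₀ := Sym2.mem_iff.mp hv₁
        intro h
        rcases hv with hv | hv
        · exact hf e₂ he₂ s(x, y₁) he₁s he₂' ⟨x, hv ▸ hv₂, by simp⟩ (h.symm ▸ rfl)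
        · exact hfree₀ e₂ he₂ (hv ▸ hv₂) h.symm
      · rw [hupd e₁ (hne_s e₁ he₁), hf₁, Function.update_self]
        have hv : v = x ∨ v = y₀ := Sym2.mem_iff.mp hv₂
        intro h
        rcases hv with hv | hv
        · exact hf e₁ he₁ s(x, y₁) he₁s he₁' ⟨x, hv ▸ hv₁, by simp⟩ h
        · exact hfree₀ e₁ he₁ (hv ▸ hv₁) h
      · rw [hupd e₁ (hne_s e₁ he₁), hupd e₂ (hne_s e₂ he₂)]
        exact hf e₁ he₁ e₂ he₂ hne ⟨v, hv₁, hv₂⟩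
    -- s₂ is a set of edges
    have hs₂e : ↑s₂ ⊆ G.edgeSet := by
      intro e he
      rw [Finset.mem_coe, hmem_s₂] at he
      rcases he with rfl | ⟨he, _⟩
      · exact hxy₀
      · exact hs he
    -- the tail is a fan for (s₂, f₁)
    have hy₀nmem : y₀ ∉ y₁ :: L'' := (List.nodup_cons.mp hnd).1
    have hxnmem : ∀ z ∈ y₀ :: y₁ :: L'', z ≠ x := fun z hz => (hadj z hz).ne'
    have hfan₂ : IsFan G s₂ f₁ x (y₁ :: L'') := by
      refine ⟨fun z hz => hadj z (by simp [hz]), (List.nodup_cons.mp hnd).2, ?_, ?_⟩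
      · intro i h
        have hmem : (y₁ :: L'')[i+1] ∈ y₁ :: L'' := List.getElem_mem _
        have h' : i + 1 + 1 < (y₀ :: y₁ :: L'').length := by simpa using Nat.succ_lt_succ h
        have := hes (i+1) h'
        rw [hmem_s₂]
        refine Or.inr ⟨by simpa using this, ?_⟩
        intro heq
        have : (y₁ :: L'')[i+1] = y₁ := sym2_inj (hxnmem _ (by simp [hmem])) (by simpa using heq)
        have hnd' := (List.nodup_cons.mp hnd).2
        rw [List.nodup_cons] at hnd'
        exact hnd'.1 (this ▸ (by simpa using List.getElem_mem (by simpa using h : i < L''.length)))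
      · intro i h
        have h' : i + 1 + 1 < (y₀ :: y₁ :: L'').length := by simpa using Nat.succ_lt_succ h
        have hmain := hfree (i+1) h'
        have hne₁ : s(x, (y₁ :: L'')[i+1]) ≠ s(x, y₀) := by
          intro heq
          exact hy₀nmem ((sym2_inj (hxnmem _ (by simp [List.getElem_mem])) heq) ▸
            List.getElem_mem _)
        rw [hupd _ hne₁]
        have hcol : f₁ s(x, (y₁ :: L'')[i+1]) = f s(x, (y₁ :: L'')[i+1]) := hupd _ hne₁
        intro e he hv
        rw [hmem_s₂] at he
        rcases he with rfl | ⟨he, _⟩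
        · exfalso
          have : (y₁ :: L'')[i] = x ∨ (y₁ :: L'')[i] = y₀ := Sym2.mem_iff.mp hv
          rcases this with h1 | h1
          · exact hxnmem _ (by simp [List.getElem_mem]) h1
          · exact hy₀nmem (h1 ▸ List.getElem_mem _)
        · rw [hupd e (hne_s e he)]
          have := hmain e he (by simpa using hv)
          simpa using this
    -- the new uncolored edge is not in s₂
    have hns₂ : s(x, y₁) ∉ s₂ := by
      rw [hmem_s₂]
      push_neg
      exact ⟨hediff.symm, fun _ => rfl⟩
    -- c is free at x w.r.t. (s₂, f₁)
    have hfx₂ : Free s₂ f₁ x c := by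
      intro e he hv
      rw [hmem_s₂] at he
      rcases he with rfl | ⟨he, _⟩
      · rw [hf₁, Function.update_self]
        exact fun h => hfx s(x, y₁) he₁s (by simp) (hc₁ ▸ h)
      · rw [hupd e (hne_s e he)]
        exact hfx e he hv
    -- c is free at the last vertex w.r.t. (s₂, f₁)
    have hlast_mem : (y₁ :: L'').getLast (List.cons_ne_nil _ _) ∈ y₁ :: L'' :=
      List.getLast_mem _
    have hlast_eq : (y₀ :: y₁ :: L'').getLast (List.cons_ne_nil _ _) =
        (y₁ :: L'').getLast (List.cons_ne_nil _ _) := by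
      simp [List.getLast]
    have hfy₂ : Free s₂ f₁ ((y₁ :: L'').getLast (List.cons_ne_nil _ _)) c := by
      intro e he hv
      rw [hmem_s₂] at he
      rcases he with rfl | ⟨he, _⟩
      · exfalso
        have : _ = x ∨ _ = y₀ := Sym2.mem_iff.mp hv
        rcases this with h1 | h1
        · exact hxnmem _ (by simp [hlast_mem]) h1
        · exact hy₀nmem (h1 ▸ hlast_mem)
      · rw [hupd e (hne_s e he)]
        exact hfy e he (hlast_eq ▸ hv)
    obtain ⟨f', hf'⟩ := IH y₁ s₂ f₁ hs₂e hf₂ hfan₂ hns₂ hfx₂ hfy₂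
    refine ⟨f', ?_⟩
    have : insert s(x, y₁) s₂ = insert s(x, y₀) s := by
      ext e
      simp only [Finset.mem_insert, hmem_s₂]
      constructor
      · rintro (rfl | rfl | ⟨he, _⟩)
        · exact Or.inr he₁s
        · exact Or.inl rfl
        · exact Or.inr he
      · rintro (rfl | he)
        · tauto
        · by_cases h : e = s(x, y₁) <;> tauto
    rwa [this] at hf'

section Kempe

variable (s : Finset (Sym2 V)) (f : Sym2 V → Fin n) (α β : Fin n)

/-- The swap of two colors. -/
def swapColor (c : Fin n) : Fin n := if c = α then β else if c = β then α else c

lemma swapColor_invol (c : Fin n) : swapColor α β (swapColor α β c) = c := by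
  unfold swapColor
  split_ifs <;> simp_all

lemma swapColor_inj {c₁ c₂ : Fin n} (h : swapColor α β c₁ = swapColor α β c₂) : c₁ = c₂ := by
  have := congrArg (swapColor α β) h
  rwa [swapColor_invol, swapColor_invol] at this

lemma swapColor_eq_self {c : Fin n} (h₁ : c ≠ α) (h₂ : c ≠ β) : swapColor α β c = c := by
  unfold swapColor
  simp [h₁, h₂]

/-- The subgraph of edges colored α or β. -/
def kempeH : SimpleGraph V where
  Adj a b := G.Adj a b ∧ s(a, b) ∈ s ∧ (f s(a, b) = α ∨ f s(a, b) = β)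
  symm := by
    refine ⟨fun a b ⟨h1, h2, h3⟩ => ?_⟩
    rw [Sym2.eq_swap] at h2 h3
    exact ⟨h1.symm, h2, h3⟩
  loopless := ⟨fun a h => G.loopless.irrefl a h.1⟩

/-- Swap the two colors on the connected component of `u₀` in the α/β subgraph. -/
noncomputable def kempeSwap (u₀ : V) : Sym2 V → Fin n :=
  open Classical in
  fun e => if (∃ v ∈ e, (kempeH G s f α β).Reachable u₀ v) ∧ e ∈ s ∧ (f e = α ∨ f e = β)
    then swapColor α β (f e) else f e

variable {s f α β} {u₀ : V}

lemma kempeSwap_spec (hs : ↑s ⊆ G.edgeSet) (v : V) (e : Sym2 V) (he : e ∈ s) (hv : v ∈ e) :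
    ((kempeH G s f α β).Reachable u₀ v → kempeSwap G s f α β u₀ e = swapColor α β (f e)) ∧
    (¬ (kempeH G s f α β).Reachable u₀ v → kempeSwap G s f α β u₀ e = f e) := by
  classical
  obtain ⟨w, rfl⟩ := Sym2.mem_iff_exists.mp hv
  have hadj : G.Adj v w := (G.mem_edgeSet).mp (hs he)
  constructor
  · intro hr
    unfold kempeSwap
    split_ifs with h1
    · rfl
    · rw [swapColor_eq_self]
      · intro hc; exact h1 ⟨⟨v, Sym2.mem_mk_left _ _, hr⟩, he, Or.inl hc⟩
      · intro hc; exact h1 ⟨⟨v, Sym2.mem_mk_left _ _, hr⟩, he, Or.inr hc⟩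
  · intro hr
    unfold kempeSwap
    split_ifs with h1
    · exfalso
      obtain ⟨⟨u, hu, hru⟩, _, hc⟩ := h1
      rcases Sym2.mem_iff.mp hu with rfl | rfl
      · exact hr hru
      · refine hr (hru.trans ?_)
        have : (kempeH G s f α β).Adj u v := by
          refine ⟨hadj.symm, ?_, ?_⟩ <;> rw [Sym2.eq_swap] <;> tauto
        exact this.reachable
    · rfl

lemma proper_kempeSwap (hs : ↑s ⊆ G.edgeSet) (hf : Proper s f) :
    Proper s (kempeSwap G s f α β u₀) := by
  intro e₁ he₁ e₂ he₂ hne ⟨v, hv₁, hv₂⟩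
  have h₁ := kempeSwap_spec G (f := f) (u₀ := u₀) (α := α) (β := β) hs v e₁ he₁ hv₁
  have h₂ := kempeSwap_spec G (f := f) (u₀ := u₀) (α := α) (β := β) hs v e₂ he₂ hv₂
  have hne' := hf e₁ he₁ e₂ he₂ hne ⟨v, hv₁, hv₂⟩
  by_cases hr : (kempeH G s f α β).Reachable u₀ v
  · rw [h₁.1 hr, h₂.1 hr]
    exact fun h => hne' (swapColor_inj α β h)
  · rw [h₁.2 hr, h₂.2 hr]
    exact hne'

lemma free_kempeSwap_of_reach (hs : ↑s ⊆ G.edgeSet) {v : V}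
    (hr : (kempeH G s f α β).Reachable u₀ v) (c : Fin n) :
    Free s (kempeSwap G s f α β u₀) v c ↔ Free s f v (swapColor α β c) := by
  unfold Free
  constructor
  · intro h e he hv heq
    refine h e he hv ?_
    rw [(kempeSwap_spec G hs v e he hv).1 hr, heq, swapColor_invol]
  · intro h e he hv heq
    rw [(kempeSwap_spec G hs v e he hv).1 hr] at heq
    exact h e he hv (by rw [← heq, swapColor_invol])

lemma free_kempeSwap_of_not_reach (hs : ↑s ⊆ G.edgeSet) {v : V}
    (hr : ¬ (kempeH G s f α β).Reachable u₀ v) (c : Fin n) :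
    Free s (kempeSwap G s f α β u₀) v c ↔ Free s f v c := by
  unfold Free
  constructor <;> intro h e he hv
  · rw [← (kempeSwap_spec G (f := f) (α := α) (β := β) (u₀ := u₀) hs v e he hv).2 hr]; exact h e he hv
  · rw [(kempeSwap_spec G (f := f) (α := α) (β := β) (u₀ := u₀) hs v e he hv).2 hr]; exact h e he hv

end Kempe

section Path

variable {H : SimpleGraph V}

/-- In a graph of max degree ≤ 2, a component containing two distinct vertices of
degree ≤ 1 cannot contain a third vertex of degree ≤ 1. -/
lemma path_three {u v w : V}
    (hdeg : ∀ z a b c, H.Adj z a → H.Adj z b → H.Adj z c → a = b ∨ a = c ∨ b = c)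
    (hu : ∀ a b, H.Adj u a → H.Adj u b → a = b)
    (hv : ∀ a b, H.Adj v a → H.Adj v b → a = b)
    (hw : ∀ a b, H.Adj w a → H.Adj w b → a = b)
    (huv : u ≠ v) (huw : u ≠ w) (hvw : v ≠ w)
    (h₁ : H.Reachable u v) (h₂ : H.Reachable u w) : False := by
  classical
  obtain ⟨p₀⟩ := h₁
  have hp := p₀.toPath
  set p := p₀.toPath.val with hpdef
  have hpath : p.IsPath := p₀.toPath.property
  -- two distinct neighbors on the path at an interior decomposition point
  have interior : ∀ (z : V) (q : H.Walk u z) (r : H.Walk z v),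
      p = q.append r → ¬ q.Nil → ¬ r.Nil →
      ∃ a b, a ≠ b ∧ H.Adj z a ∧ H.Adj z b ∧ a ∈ q.support ∧ b ∈ r.support.tail := by
    intro z q r hqr hq hr
    obtain ⟨b, hzb, r', rfl⟩ := SimpleGraph.Walk.not_nil_iff.mp hr
    have hqrev : ¬ q.reverse.Nil := by
      rwa [SimpleGraph.Walk.nil_iff_length_eq, SimpleGraph.Walk.length_reverse,
        ← SimpleGraph.Walk.nil_iff_length_eq]
    obtain ⟨a, hza, q', hq'⟩ := SimpleGraph.Walk.not_nil_iff.mp hqrev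
    have ha_mem : a ∈ q.support := by
      have : a ∈ q.reverse.support := by rw [hq']; simp
      rwa [SimpleGraph.Walk.support_reverse, List.mem_reverse] at this
    have hb_mem : b ∈ (SimpleGraph.Walk.cons hzb r').support.tail := by simp
    have hnd : (q.support).Disjoint ((SimpleGraph.Walk.cons hzb r').support.tail) := by
      have := hpath.support_nodup
      rw [hqr, SimpleGraph.Walk.support_append] at this
      exact List.disjoint_of_nodup_append this
    refine ⟨a, b, ?_, hza, hzb, ha_mem, hb_mem⟩
    intro hab
    exact hnd ha_mem (hab ▸ hb_mem)
  -- the support of p is closed under adjacency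
  have closed : ∀ z ∈ p.support, ∀ t, H.Adj z t → t ∈ p.support := by
    intro z hz t hzt
    obtain ⟨q, r, hqr⟩ := SimpleGraph.Walk.mem_support_iff_exists_append.mp hz
    by_cases hq : q.Nil
    · -- z = u
      have hzu : u = z := hq.eq
      subst hzu
      by_cases hr : r.Nil
      · exact absurd hr.eq huv
      · obtain ⟨b, hzb, r', rfl⟩ := SimpleGraph.Walk.not_nil_iff.mp hr
        have : t = b := hu t b hzt hzb
        subst this
        rw [hqr, SimpleGraph.Walk.mem_support_append_iff]
        right; simp
    · by_cases hr : r.Nil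
      · -- z = v
        have hzv : z = v := hr.eq
        subst hzv
        have hqrev : ¬ q.reverse.Nil := by
          rwa [SimpleGraph.Walk.nil_iff_length_eq, SimpleGraph.Walk.length_reverse,
            ← SimpleGraph.Walk.nil_iff_length_eq]
        obtain ⟨a, hza, q', hq'⟩ := SimpleGraph.Walk.not_nil_iff.mp hqrev
        have : t = a := hv t a hzt hza
        subst this
        have : t ∈ q.reverse.support := by rw [hq']; simp
        rw [SimpleGraph.Walk.support_reverse, List.mem_reverse] at this
        rw [hqr, SimpleGraph.Walk.mem_support_append_iff]
        exact Or.inl this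
      · obtain ⟨a, b, hab, hza, hzb, ha, hb⟩ := interior z q r hqr hq hr
        rcases hdeg z a b t hza hzb hzt with h | h | h
        · exact absurd h hab
        · rw [hqr, SimpleGraph.Walk.mem_support_append_iff]
          exact Or.inl (h ▸ ha)
        · rw [hqr, SimpleGraph.Walk.mem_support_append_iff]
          right
          exact (h ▸ List.mem_of_mem_tail hb)
  -- every vertex reachable from u is in the support
  have reach_sub' : ∀ (a b : V) (q : H.Walk a b), a ∈ p.support → b ∈ p.support := by
    intro a b q
    induction q with
    | nil => exact id
    | cons hadj q' IH => exact fun ha => IH (closed _ ha _ hadj)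
  have reach_sub : ∀ t, H.Reachable u t → t ∈ p.support := by
    intro t ht
    obtain ⟨q⟩ := ht
    exact reach_sub' u t q (SimpleGraph.Walk.start_mem_support _)
  -- w is in the support; it is interior, contradiction with degree ≤ 1
  have hw_mem : w ∈ p.support := reach_sub w h₂
  obtain ⟨q, r, hqr⟩ := SimpleGraph.Walk.mem_support_iff_exists_append.mp hw_mem
  have hqn : ¬ q.Nil := fun h => huw h.eq
  have hrn : ¬ r.Nil := fun h => hvw h.eq.symm
  obtain ⟨a, b, hab, hwa, hwb, _, _⟩ := interior w q r hqr hqn hrn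
  exact hab (hw a b hwa hwb)

end Path

lemma swapColor_left : swapColor α β α = β := by
  unfold swapColor; simp

lemma swapColor_right : swapColor α β β = α := by
  unfold swapColor
  split_ifs <;> simp_all

lemma fan_snoc {s : Finset (Sym2 V)} {f : Sym2 V → Fin n} {x : V} {L : List V}
    (hL : IsFan G s f x L) (hLne : L ≠ []) {z : V} (hz : z ∉ L) (hadj : G.Adj x z)
    (hes : s(x, z) ∈ s) (hfree : Free s f (L.getLast hLne) (f s(x, z))) :
    IsFan G s f x (L ++ [z]) := by
  obtain ⟨h1, h2, h3, h4⟩ := hL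
  refine ⟨?_, ?_, ?_, ?_⟩
  · intro w hw
    rw [List.mem_append] at hw
    rcases hw with hw | hw
    · exact h1 w hw
    · simp at hw; subst hw; exact hadj
  · rw [List.nodup_append]
    exact ⟨h2, List.nodup_singleton _, by simpa using fun (a : V) (ha : a ∈ L) (h : a = z) => hz (h ▸ ha)⟩
  · intro i h
    rw [List.length_append, List.length_singleton] at h
    by_cases hi : i + 1 < L.length
    · rw [List.getElem_append_left hi]
      exact h3 i hi
    · have : i + 1 = L.length := by omega
      rw [List.getElem_append_right (by omega)]
      simpa [this] using hes
  · intro i h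
    rw [List.length_append, List.length_singleton] at h
    by_cases hi : i + 1 < L.length
    · rw [List.getElem_append_left hi, List.getElem_append_left (by omega)]
      exact h4 i hi
    · have hieq : i + 1 = L.length := by omega
      have hiL : i < L.length := by omega
      rw [List.getElem_append_left hiL, List.getElem_append_right (by omega)]
      have hlast : L.getLast hLne = L[i] := by
        rw [List.getLast_eq_getElem]
        congr 1
        omega
      simpa [hieq, hlast] using hfree

lemma step {Δ : ℕ} (hΔ : ∀ v, G.degree v ≤ Δ) (s : Finset (Sym2 V)) (hs : ↑s ⊆ G.edgeSet)
    (f : Sym2 V → Fin (Δ + 1)) (hf : Proper s f) {x y : V} (hxy : G.Adj x y)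
    (hns : s(x, y) ∉ s) :
    ∃ f' : Sym2 V → Fin (Δ + 1), Proper (insert s(x, y) s) f' := by
  classical
  -- a maximal fan
  set P : ℕ → Prop := fun k => ∃ L' : List V, IsFan G s f x (y :: L') ∧ (y :: L').length = k
    with hPdef
  have hP1 : P 1 := by
    refine ⟨[], ⟨?_, by simp, ?_, ?_⟩, rfl⟩
    · intro z hz
      simp only [List.mem_singleton] at hz
      subst hz
      exact hxy
    · intro i h
      simp at h
    · intro i h
      simp at h
  have hcard : 1 ≤ Fintype.card V := Fintype.card_pos_iff.mpr ⟨x⟩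
  have hPk := Nat.findGreatest_spec hcard hP1
  obtain ⟨L', hfan, hlen⟩ := hPk
  set L : List V := y :: L' with hLdef
  have hLne : L ≠ [] := List.cons_ne_nil _ _
  obtain ⟨hadjL, hndL, hesL, hfreeL⟩ := hfan
  have hmax : ∀ z, G.Adj x z → s(x, z) ∈ s → z ∉ L →
      ¬ Free s f (L.getLast hLne) (f s(x, z)) := by
    intro z hadj hes hzL hfree
    have hext : IsFan G s f x (L ++ [z]) :=
      fan_snoc G ⟨hadjL, hndL, hesL, hfreeL⟩ hLne hzL hadj hes hfree
    have hnd' : (L ++ [z]).Nodup := hext.2.1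
    have hlen' : (L ++ [z]).length ≤ Fintype.card V := List.Nodup.length_le_card hnd'
    have : P (L.length + 1) := by
      refine ⟨L' ++ [z], ?_, by simp [hLdef]⟩
      have heq : L ++ [z] = y :: (L' ++ [z]) := by simp [hLdef]
      exact heq ▸ hext
    have hgt : Nat.findGreatest P (Fintype.card V) < L.length + 1 := by
      rw [← hlen]
      exact Nat.lt_succ_self _
    exact Nat.findGreatest_is_greatest hgt (by simpa using hlen') this
  set last : V := L.getLast hLne with hlastdef
  have hlast_mem : last ∈ L := List.getLast_mem _
  -- easy case: a common free color
  by_cases hcommon : ∃ c, Free s f x c ∧ Free s f last c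
  · obtain ⟨c, hcx, hcl⟩ := hcommon
    exact rot G x c L' y s f hs hf ⟨hadjL, hndL, hesL, hfreeL⟩ hns hcx hcl
  -- otherwise take α free at x, β free at last
  obtain ⟨α, hαx⟩ := exists_free G hΔ s hs f x
  obtain ⟨β, hβl⟩ := exists_free G hΔ s hs f last
  have hβx : ¬ Free s f x β := fun h => hcommon ⟨β, h, hβl⟩
  have hexists : ∃ e ∈ s, x ∈ e ∧ f e = β := by
    unfold Free at hβx
    push_neg at hβx
    obtain ⟨e, he, hxe, hfe⟩ := hβx
    exact ⟨e, he, hxe, hfe⟩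
  obtain ⟨e, he, hxe, hfe⟩ := hexists
  obtain ⟨z, rfl⟩ := Sym2.mem_iff_exists.mp hxe
  have hxz : G.Adj x z := (G.mem_edgeSet).mp (hs he)
  have hzL : z ∈ L := by
    by_contra hzL
    exact hmax z hxz he hzL (hfe ▸ hβl)
  obtain ⟨j, hj, hLj⟩ := List.mem_iff_getElem.mp hzL
  have hj0 : j ≠ 0 := by
    rintro rfl
    have hyz : y = z := by simpa [hLdef] using hLj
    exact hns (by rw [hyz]; exact he)
  have hjlast : j < L.length - 1 := by
    have hne : j ≠ L.length - 1 := by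
      rintro rfl
      have : L[L.length - 1] = last := (List.getLast_eq_getElem hLne).symm
      rw [this] at hLj
      exact hβl s(x, z) he (by simp [← hLj]) hfe
    omega
  -- the Kempe subgraph and basic degree facts
  set H : SimpleGraph V := kempeH G s f α β with hHdef
  have key_eq : ∀ p q : V, H.Adj p q → H.Adj p q → True := fun _ _ _ _ => trivial
  have huniq : ∀ (v : V) (γ : Fin (Δ + 1)), (γ = α ∨ γ = β) → Free s f v γ →
      ∀ a b, H.Adj v a → H.Adj v b → a = b := by
    rintro v γ hγ hfree a b ⟨ha1, ha2, ha3⟩ ⟨hb1, hb2, hb3⟩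
    have heq : f s(v, a) = f s(v, b) := by
      have hna : f s(v, a) ≠ γ := hfree _ ha2 (by simp)
      have hnb : f s(v, b) ≠ γ := hfree _ hb2 (by simp)
      rcases hγ with rfl | rfl
      · rw [ha3.resolve_left hna, hb3.resolve_left hnb]
      · rw [ha3.resolve_right hna, hb3.resolve_right hnb]
    by_cases hpq : s(v, a) = s(v, b)
    · exact sym2_inj ha1.ne' hpq
    · exact absurd heq (hf _ ha2 _ hb2 hpq ⟨v, by simp, by simp⟩)
  have hkey : ∀ (v p q : V), H.Adj v p → H.Adj v q → f s(v, p) = f s(v, q) → p = q := by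
    rintro v p q ⟨hp1, hp2, _⟩ ⟨hq1, hq2, _⟩ heq
    by_cases hpq : s(v, p) = s(v, q)
    · exact sym2_inj hp1.ne' hpq
    · exact absurd heq (hf _ hp2 _ hq2 hpq ⟨v, by simp, by simp⟩)
  have hdeg2 : ∀ v a b c, H.Adj v a → H.Adj v b → H.Adj v c → a = b ∨ a = c ∨ b = c := by
    intro v a b c ha hb hc
    have ha3 := ha.2.2
    have hb3 := hb.2.2
    have hc3 := hc.2.2
    rcases ha3 with h1 | h1 <;> rcases hb3 with h2 | h2 <;> rcases hc3 with h3 | h3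
    · exact Or.inl (hkey v a b ha hb (h1.trans h2.symm))
    · exact Or.inl (hkey v a b ha hb (h1.trans h2.symm))
    · exact Or.inr (Or.inl (hkey v a c ha hc (h1.trans h3.symm)))
    · exact Or.inr (Or.inr (hkey v b c hb hc (h2.trans h3.symm)))
    · exact Or.inr (Or.inr (hkey v b c hb hc (h2.trans h3.symm)))
    · exact Or.inr (Or.inl (hkey v a c ha hc (h1.trans h3.symm)))
    · exact Or.inl (hkey v a b ha hb (h1.trans h2.symm))
    · exact Or.inl (hkey v a b ha hb (h1.trans h2.symm))
  -- the fan vertex before z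
  have hjm1 : j - 1 + 1 < L.length := by omega
  have hjm1' : j - 1 + 1 = j := by omega
  have hfree_jm1 : Free s f L[j - 1] β := by
    have := hfreeL (j - 1) hjm1
    have heq : L[j - 1 + 1] = L[j]'hj := by
      congr 1
    rw [heq, hLj, hfe] at this
    exact this
  have hβ_edge_j : f s(x, L[j]'hj) = β := by rw [hLj]; exact hfe
  -- the swapped coloring
  set f' : Sym2 V → Fin (Δ + 1) := kempeSwap G s f α β last with hf'def
  have hpf' : Proper s f' := proper_kempeSwap G hs hf
  have hreach_last : H.Reachable last last := SimpleGraph.Reachable.refl _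
  -- the prefix fan (take j) is a fan for f' whenever x keeps color α free;
  -- its freeness conditions only involve colors outside {α, β}
  have hPrefLen : (L.take j).length = j := by
    rw [List.length_take]
    omega
  have hPrefEq : L.take j = y :: L'.take (j - 1) := by
    conv_lhs => rw [show j = (j - 1) + 1 by omega]
    rw [hLdef, List.take_succ_cons]
  have hPref_getLast : (L.take j).getLast (by rw [hPrefEq]; exact List.cons_ne_nil _ _)
      = L[j - 1] := by
    rw [List.getLast_eq_getElem, List.getElem_take]
    congr 1
    omega
  have hcol_ne : ∀ i (h : i + 1 < L.length), i + 1 ≠ j → f s(x, L[i+1]) ≠ β := by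
    intro i h hij heq
    have hne : s(x, L[i+1]) ≠ s(x, L[j]'hj) := by
      intro hcontra
      have := sym2_inj (hadjL _ (List.getElem_mem _)).ne' hcontra
      exact hij ((List.Nodup.getElem_inj_iff hndL).mp this)
    have hesj : s(x, L[j]'hj) ∈ s := by
      have := hesL (j - 1) hjm1
      simpa [hjm1'] using this
    exact hf _ (hesL i h) _ hesj hne ⟨x, by simp, by simp⟩ (heq.trans hβ_edge_j.symm)
  have hcol_ne_α : ∀ i (h : i + 1 < L.length), f s(x, L[i+1]) ≠ α := by
    intro i h
    exact hαx _ (hesL i h) (by simp)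
  -- f' agrees with f on edges at x when x is not reachable, and on non-{α,β} edges always
  have hedge_unchanged : ∀ i (h : i + 1 < L.length), i + 1 ≠ j →
      f' s(x, L[i+1]) = f s(x, L[i+1]) := by
    intro i h hij
    rw [hf'def]
    by_cases hrx : H.Reachable last x
    · rw [(kempeSwap_spec G hs x s(x, L[i+1]) (hesL i h) (by simp)).1 hrx]
      exact swapColor_eq_self α β (hcol_ne_α i h) (hcol_ne i h hij)
    · exact (kempeSwap_spec G hs x s(x, L[i+1]) (hesL i h) (by simp)).2 hrx
  have hfree_unchanged : ∀ (v : V) (c : Fin (Δ + 1)), c ≠ α → c ≠ β →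
      (Free s f' v c ↔ Free s f v c) := by
    intro v c hcα hcβ
    rw [hf'def]
    by_cases hrv : H.Reachable last v
    · rw [free_kempeSwap_of_reach G hs hrv, swapColor_eq_self α β hcα hcβ]
    · exact free_kempeSwap_of_not_reach G hs hrv c
  have hPrefFan : IsFan G s f' x (L.take j) := by
    refine ⟨?_, ?_, ?_, ?_⟩
    · intro w hw
      exact hadjL w (List.take_subset _ _ hw)
    · exact List.Sublist.nodup (List.take_sublist _ _) hndL
    · intro i h
      rw [hPrefLen] at h
      rw [List.getElem_take]
      exact hesL i (by omega)
    · intro i h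
      rw [hPrefLen] at h
      have hiL : i + 1 < L.length := by omega
      have h1 : (L.take j)[i]'(by rw [hPrefLen]; omega) = L[i]'(by omega) := List.getElem_take
      have h2 : (L.take j)[i+1]'(by rw [hPrefLen]; omega) = L[i+1]'hiL := List.getElem_take
      rw [h1, h2, hedge_unchanged i hiL (by omega)]
      rw [hfree_unchanged _ _ (hcol_ne_α i hiL) (hcol_ne i hiL (by omega))]
      exact hfreeL i hiL
  by_cases hrx : H.Reachable last x
  · -- Case A: x is in the Kempe component of `last`. Swap; then β is free at x and
    -- (since L[j-1] is not in the component, by the path argument) at L[j-1].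
    have hnr : ¬ H.Reachable last L[j - 1] := by
      intro hr
      refine path_three hdeg2 ?_ ?_ ?_ ?_ ?_ ?_ hrx hr
      · exact huniq last β (Or.inr rfl) hβl
      · exact huniq x α (Or.inl rfl) hαx
      · exact huniq _ β (Or.inr rfl) hfree_jm1
      · exact fun h => (hadjL last hlast_mem).ne h.symm
      · intro h
        have hlast_idx : L[L.length - 1]'(by omega) = last := (List.getLast_eq_getElem hLne).symm
        rw [← hlast_idx] at h
        have := (List.Nodup.getElem_inj_iff hndL).mp h
        omega
      · exact fun h => (hadjL _ (List.getElem_mem _)).ne h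
    have hfx' : Free s f' x β := by
      rw [hf'def, free_kempeSwap_of_reach G hs hrx, swapColor_right]
      exact hαx
    have hfjm1' : Free s f' L[j - 1] β := by
      rw [hf'def]
      exact (free_kempeSwap_of_not_reach G hs hnr β).mpr hfree_jm1
    have hfanP := hPrefFan
    rw [hPrefEq] at hfanP
    have hlastP : (y :: L'.take (j - 1)).getLast (List.cons_ne_nil _ _) = L[j - 1] := by
      rw [← hPref_getLast]
      congr 1 <;> rw [hPrefEq]
    refine rot G x β (L'.take (j - 1)) y s f' hs hpf' hfanP hns hfx' ?_
    rw [hlastP]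
    exact hfjm1'
  · -- Case B: x is not in the component.
    have hfx' : Free s f' x α := by
      rw [hf'def]
      exact (free_kempeSwap_of_not_reach G hs hrx α).mpr hαx
    by_cases hrj : H.Reachable last L[j - 1]
    · -- B2: L[j-1] is in the component: after the swap α is free at L[j-1]; rotate prefix.
      have hfjm1' : Free s f' L[j - 1] α := by
        rw [hf'def, free_kempeSwap_of_reach G hs hrj, swapColor_left]
        exact hfree_jm1
      have hfanP := hPrefFan
      rw [hPrefEq] at hfanP
      have hlastP : (y :: L'.take (j - 1)).getLast (List.cons_ne_nil _ _) = L[j - 1] := by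
        rw [← hPref_getLast]
        congr 1 <;> rw [hPrefEq]
      refine rot G x α (L'.take (j - 1)) y s f' hs hpf' hfanP hns hfx' ?_
      rw [hlastP]
      exact hfjm1'
    · -- B1: neither x nor L[j-1] in the component: the full fan works with α.
      have hfullfan : IsFan G s f' x L := by
        refine ⟨hadjL, hndL, hesL, ?_⟩
        intro i h
        by_cases hij : i + 1 = j
        · have hieq : i = j - 1 := by omega
          have hcol : f' s(x, L[i+1]) = β := by
            rw [hf'def, (kempeSwap_spec G hs x s(x, L[i+1]) (hesL i h) (by simp)).2 hrx]
            simp only [hij]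
            exact hβ_edge_j
          rw [hcol]
          simp only [hieq]
          rw [hf'def]
          exact (free_kempeSwap_of_not_reach G hs hrj β).mpr hfree_jm1
        · rw [hedge_unchanged i h hij,
            hfree_unchanged _ _ (hcol_ne_α i h) (hcol_ne i h hij)]
          exact hfreeL i h
      have hflast' : Free s f' last α := by
        rw [hf'def, free_kempeSwap_of_reach G hs hreach_last, swapColor_left]
        exact hβl
      exact rot G x α L' y s f' hs hpf' hfullfan hns hfx' hflast'

theorem key {Δ : ℕ} (hΔ : ∀ v, G.degree v ≤ Δ) :
    ∀ s : Finset (Sym2 V), ↑s ⊆ G.edgeSet → ∃ f : Sym2 V → Fin (Δ + 1), Proper s f := by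
  intro s
  induction s using Finset.induction_on with
  | empty => exact fun _ => ⟨fun _ => 0, by simp [Proper]⟩
  | @insert e s hes IH =>
    intro hsub
    have hs : ↑s ⊆ G.edgeSet := by
      intro e' he'
      exact hsub (by simp [he'])
    obtain ⟨f, hf⟩ := IH hs
    have he : e ∈ G.edgeSet := hsub (by simp)
    induction e using Sym2.ind with
    | _ x y =>
      exact step G hΔ s hs f hf ((G.mem_edgeSet).mp he) hes

end VizingAux

/-- Every graph with maximum degree Δ admits a partition of its edges into at
most Δ + 1 matchings, i.e. an assignment of edges to Δ + 1 classes such that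
distinct edges sharing a vertex lie in distinct classes (Vizing's theorem). -/
theorem stmt_7 {V : Type*} [Fintype V] [DecidableEq V] (G : SimpleGraph V)
    [DecidableRel G.Adj] (Δ : ℕ) (hΔ : ∀ v, G.degree v ≤ Δ) :
    ∃ f : Sym2 V → Fin (Δ + 1),
      ∀ e₁ ∈ G.edgeSet, ∀ e₂ ∈ G.edgeSet,
        e₁ ≠ e₂ → (∃ v, v ∈ e₁ ∧ v ∈ e₂) → f e₁ ≠ f e₂ := by
  classical
  obtain ⟨f, hf⟩ := VizingAux.key G hΔ G.edgeFinset (by simp)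
  refine ⟨f, fun e₁ he₁ e₂ he₂ hne hshare => ?_⟩
  exact hf e₁ (by rwa [SimpleGraph.mem_edgeFinset]) e₂ (by rwa [SimpleGraph.mem_edgeFinset])
    hne hshare
end
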